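/- arXiv:2305.01551 — 3 statements merged into one kernel-verified Lean document; each statement's English description precedes it below -/
import Mathlib

section
/- Let 0 < α < 1, l > 0, and let φ, ψ be complex-valued absolutely continuous functions on [0,l]. Then ∫_0^l (D_{0+}^α φ)(x)·ψ(x) dx = ψ(l)·(I_{0+}^{1−α} φ)(l) − (1/Γ(1−α)) ∫_0^l φ(t) ( ∫_t^l ψ′(x)·(x−t)^{−α} dx ) dt. -/
/-!
`I_{0+}^{1-α} φ` is the convolution of `φ` with the integrable kernel `k(y) = y^{-α}/Γ(1-α)`.
Substituting `φ(t) = φ(0) + ∫_0^t φ'` and exchanging the order of integration over the triangle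
`0 < t ≤ x ≤ l` shows that `F = I_{0+}^{1-α} φ` is absolutely continuous with derivative
`φ(0) k(x) + ∫_0^x φ'(t) k(x - t) dt`, which by Lebesgue's differentiation theorem is
`D_{0+}^α φ` almost everywhere. Integrating by parts against `ψ` (again Fubini on the triangle,
with `F(0) = 0`) and exchanging the order of integration once more in `∫ F ψ'`, which is
legitimate because `φ` is bounded, gives the formula.
-/

open MeasureTheory Set Filter Topology

/-- Left Riemann–Liouville fractional integral of order `α` based at `a` (complex-valued). -/
noncomputable def RLIplus (α a : ℝ) (f : ℝ → ℂ) (x : ℝ) : ℂ :=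
  ((1 / Real.Gamma α : ℝ) : ℂ) * ∫ t in a..x, f t * (((x - t) ^ (α - 1) : ℝ) : ℂ)

/-- Right Riemann–Liouville fractional integral of order `α` based at `b` (complex-valued). -/
noncomputable def RLIminus (α b : ℝ) (f : ℝ → ℂ) (x : ℝ) : ℂ :=
  ((1 / Real.Gamma α : ℝ) : ℂ) * ∫ t in x..b, f t * (((t - x) ^ (α - 1) : ℝ) : ℂ)

/-- Left Riemann–Liouville fractional derivative of order `α` (`0 < α < 1`): `d/dx (I_{a+}^{1-α} f)`. -/
noncomputable def RLDplus (α a : ℝ) (f : ℝ → ℂ) (x : ℝ) : ℂ :=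
  deriv (RLIplus (1 - α) a f) x

/-- Right Riemann–Liouville fractional derivative of order `α` (`0 < α < 1`): `-d/dx (I_{b-}^{1-α} f)`. -/
noncomputable def RLDminus (α b : ℝ) (f : ℝ → ℂ) (x : ℝ) : ℂ :=
  - deriv (RLIminus (1 - α) b f) x

/-- `f` is absolutely continuous on `[a,b]` with (a.e.) derivative `f'`:
there is an integrable `f'` with `f x = f a + ∫_a^x f'`. -/
def ACDerivOn (a b : ℝ) (f f' : ℝ → ℂ) : Prop :=
  IntervalIntegrable f' MeasureTheory.volume a b ∧
    ∀ x ∈ Set.Icc a b, f x = f a + ∫ t in a..x, f' t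

open Function

def triangle (a b : ℝ) : Set (ℝ × ℝ) := {p | a < p.2 ∧ p.2 ≤ p.1 ∧ p.1 ≤ b}

lemma measurableSet_triangle (a b : ℝ) : MeasurableSet (triangle a b) :=
  (measurableSet_lt measurable_const measurable_snd).inter
    ((measurableSet_le measurable_snd measurable_fst).inter
      (measurableSet_le measurable_fst measurable_const))

lemma triangle_subset_prod (a b : ℝ) : triangle a b ⊆ Ioc a b ×ˢ Ioc a b :=
  fun _ ⟨h₁, h₂, h₃⟩ => ⟨⟨h₁.trans_le h₂, h₃⟩, ⟨h₁, h₂.trans h₃⟩⟩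

section Triangle

variable {E : Type*} [NormedAddCommGroup E] [NormedSpace ℝ E] {a b : ℝ}

lemma integral_indicator_triangle_fst (F : ℝ × ℝ → E) (x : ℝ) :
    ∫ t, (triangle a b).indicator F (x, t) =
      (Ioc a b).indicator (fun x => ∫ t in a..x, F (x, t)) x := by
  by_cases hx : x ∈ Ioc a b
  · have hsec : (fun t => (triangle a b).indicator F (x, t)) =
        (Ioc a x).indicator (fun t => F (x, t)) := by
      ext t
      simp only [indicator, triangle, mem_ofPred_eq, mem_Ioc, hx.2, and_true]
    rw [indicator_of_mem hx, hsec, integral_indicator measurableSet_Ioc,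
      intervalIntegral.integral_of_le hx.1.le]
  · rw [indicator_of_notMem hx]
    refine integral_eq_zero_of_ae (Eventually.of_forall fun t => indicator_of_notMem ?_ _)
    exact fun ⟨h₁, h₂, h₃⟩ => hx ⟨h₁.trans_le h₂, h₃⟩

lemma integral_indicator_triangle_snd (F : ℝ × ℝ → E) (t : ℝ) :
    ∫ x, (triangle a b).indicator F (x, t) =
      (Ioc a b).indicator (fun t => ∫ x in t..b, F (x, t)) t := by
  by_cases ht : t ∈ Ioc a b
  · have hsec : (fun x => (triangle a b).indicator F (x, t)) =
        (Icc t b).indicator (fun x => F (x, t)) := by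
      ext x
      simp only [indicator, triangle, mem_ofPred_eq, mem_Icc, ht.1, true_and]
    rw [indicator_of_mem ht, hsec, integral_indicator measurableSet_Icc,
      integral_Icc_eq_integral_Ioc, intervalIntegral.integral_of_le ht.2]
  · rw [indicator_of_notMem ht]
    refine integral_eq_zero_of_ae (Eventually.of_forall fun x => indicator_of_notMem ?_ _)
    exact fun ⟨h₁, h₂, h₃⟩ => ht ⟨h₁, h₂.trans h₃⟩

lemma MeasureTheory.IntegrableOn.integrableOn_intervalIntegral_triangle {f : ℝ → ℝ → E}
    (hf : IntegrableOn (uncurry f) (triangle a b)) :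
    IntegrableOn (fun x => ∫ t in a..x, f x t) (Ioc a b) := by
  have h := ((integrable_indicator_iff (measurableSet_triangle a b)).2 hf).integral_prod_left
  simp_rw [integral_indicator_triangle_fst] at h
  exact (integrable_indicator_iff measurableSet_Ioc).1 h

theorem integral_integral_swap_triangle [CompleteSpace E] (hab : a ≤ b) {f : ℝ → ℝ → E}
    (hf : IntegrableOn (uncurry f) (triangle a b)) :
    ∫ x in a..b, ∫ t in a..x, f x t = ∫ t in a..b, ∫ x in t..b, f x t := by
  have h := integral_integral_swap (f := fun x t => (triangle a b).indicator (uncurry f) (x, t))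
    ((integrable_indicator_iff (measurableSet_triangle a b)).2 hf)
  simp_rw [integral_indicator_triangle_fst, integral_indicator_triangle_snd,
    integral_indicator measurableSet_Ioc] at h
  rwa [intervalIntegral.integral_of_le hab, intervalIntegral.integral_of_le hab]

end Triangle

section Kernel

variable {a b : ℝ}

lemma integrableOn_triangle_mul {v u : ℝ → ℂ} (hv : IntegrableOn v (Ioc a b))
    (hu : IntegrableOn u (Ioc a b)) :
    IntegrableOn (fun p : ℝ × ℝ => v p.1 * u p.2) (triangle a b) := by
  have h : IntegrableOn (fun p : ℝ × ℝ => v p.1 * u p.2) (Ioc a b ×ˢ Ioc a b)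
      (volume.prod volume) := by
    rw [IntegrableOn, ← Measure.prod_restrict]
    exact hv.mul_prod hu
  exact h.mono_set (triangle_subset_prod a b)

lemma integrableOn_triangle_mul_sub {u k : ℝ → ℂ} (hu : IntegrableOn u (Ioc a b))
    (hk : IntegrableOn k (Icc 0 (b - a))) :
    IntegrableOn (fun p : ℝ × ℝ => u p.2 * k (p.1 - p.2)) (triangle a b) := by
  have h := (hu.integrable_indicator measurableSet_Ioc).convolution_integrand
    (ContinuousLinearMap.mul ℂ ℂ) (hk.integrable_indicator measurableSet_Icc)
  refine h.integrableOn.congr_fun (fun p ⟨h₁, h₂, h₃⟩ => ?_) (measurableSet_triangle a b)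
  have hp₂ : p.2 ∈ Ioc a b := ⟨h₁, h₂.trans h₃⟩
  have hp : p.1 - p.2 ∈ Icc 0 (b - a) := ⟨sub_nonneg.2 h₂, by linarith⟩
  simp [indicator_of_mem hp₂, indicator_of_mem hp]

lemma integrableOn_triangle_mul_sub_fst {v k : ℝ → ℂ} (hv : IntegrableOn v (Ioc a b))
    (hk : IntegrableOn k (Icc 0 (b - a))) :
    IntegrableOn (fun p : ℝ × ℝ => v p.1 * k (p.1 - p.2)) (triangle a b) := by
  have h := ((hv.integrable_indicator measurableSet_Ioc).convolution_integrand
    (ContinuousLinearMap.mul ℂ ℂ)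
    (hk.integrable_indicator measurableSet_Icc).comp_neg).swap
  refine h.integrableOn.congr_fun (fun p ⟨h₁, h₂, h₃⟩ => ?_) (measurableSet_triangle a b)
  have hp₁ : p.1 ∈ Ioc a b := ⟨h₁.trans_le h₂, h₃⟩
  have hp : p.1 - p.2 ∈ Icc 0 (b - a) := ⟨sub_nonneg.2 h₂, by linarith⟩
  simp [indicator_of_mem hp₁, neg_sub, indicator_of_mem hp]

lemma integrableOn_triangle_mul_mul_sub {u v k : ℝ → ℂ} {C : ℝ}
    (hu : AEStronglyMeasurable u (volume.restrict (Ioc a b))) (hC : ∀ t ∈ Ioc a b, ‖u t‖ ≤ C)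
    (hv : IntegrableOn v (Ioc a b)) (hk : IntegrableOn k (Icc 0 (b - a))) :
    IntegrableOn (fun p : ℝ × ℝ => u p.2 * (v p.1 * k (p.1 - p.2))) (triangle a b) := by
  have hu' : AEStronglyMeasurable (fun p : ℝ × ℝ => u p.2)
      ((volume.prod volume).restrict (triangle a b)) := by
    have h := ((aestronglyMeasurable_indicator_iff measurableSet_Ioc).2 hu).comp_snd
      (μ := (volume : Measure ℝ))
    refine h.restrict.congr ((ae_restrict_mem (measurableSet_triangle a b)).mono ?_)
    exact fun p ⟨h₁, h₂, h₃⟩ => indicator_of_mem (show p.2 ∈ Ioc a b from ⟨h₁, h₂.trans h₃⟩) u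
  have hbound : ∀ p ∈ triangle a b, ‖u p.2‖ ≤ C :=
    fun p ⟨h₁, h₂, h₃⟩ => hC p.2 ⟨h₁, h₂.trans h₃⟩
  exact (integrableOn_triangle_mul_sub_fst hv hk).bdd_mul hu'
    (ae_restrict_of_forall_mem (measurableSet_triangle a b) hbound)

theorem integral_intervalIntegral_mul_kernel_mul {u v k : ℝ → ℂ} {C : ℝ} (hab : a ≤ b)
    (hu : AEStronglyMeasurable u (volume.restrict (Ioc a b))) (hC : ∀ t ∈ Ioc a b, ‖u t‖ ≤ C)
    (hv : IntegrableOn v (Ioc a b)) (hk : IntegrableOn k (Icc 0 (b - a))) :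
    ∫ x in a..b, (∫ t in a..x, u t * k (x - t)) * v x
      = ∫ t in a..b, u t * ∫ x in t..b, v x * k (x - t) := by
  have hprod : IntegrableOn (uncurry fun x t => u t * (v x * k (x - t))) (triangle a b) :=
    integrableOn_triangle_mul_mul_sub hu hC hv hk
  calc ∫ x in a..b, (∫ t in a..x, u t * k (x - t)) * v x
      = ∫ x in a..b, ∫ t in a..x, u t * (v x * k (x - t)) := by
        refine intervalIntegral.integral_congr fun x _ => ?_
        simp only [← intervalIntegral.integral_mul_const]
        exact intervalIntegral.integral_congr fun t _ => by ring
    _ = ∫ t in a..b, u t * ∫ x in t..b, v x * k (x - t) := by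
        simp only [integral_integral_swap_triangle hab hprod, intervalIntegral.integral_const_mul]

end Kernel

namespace ACDerivOn

variable {a b : ℝ} {f f' g g' k : ℝ → ℂ}

lemma integrableOn (hab : a ≤ b) (hf : ACDerivOn a b f f') : IntegrableOn f' (Ioc a b) :=
  (intervalIntegrable_iff_integrableOn_Ioc_of_le hab).1 hf.1

lemma continuousOn (hf : ACDerivOn a b f f') : ContinuousOn f (Icc a b) :=
  ((continuousOn_const.add (intervalIntegral.continuousOn_primitive_interval' hf.1
    left_mem_uIcc)).mono Icc_subset_uIcc).congr hf.2

lemma integral_eq_sub (hf : ACDerivOn a b f f') {x y : ℝ} (hx : x ∈ Icc a b)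
    (hy : y ∈ Icc a b) : ∫ t in x..y, f' t = f y - f x := by
  have hI : ∀ z ∈ Icc a b, IntervalIntegrable f' volume a z :=
    fun z hz => hf.1.mono_set (uIcc_subset_uIcc left_mem_uIcc (Icc_subset_uIcc hz))
  rw [hf.2 x hx, hf.2 y hy, ← intervalIntegral.integral_interval_sub_left (hI y hy) (hI x hx)]
  ring

lemma const_mul (hf : ACDerivOn a b f f') (c : ℂ) :
    ACDerivOn a b (fun x => c * f x) (fun x => c * f' x) :=
  ⟨hf.1.const_mul c, fun x hx => by
    simp only [hf.2 x hx, intervalIntegral.integral_const_mul, mul_add]⟩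

lemma ae_deriv_eq (hf : ACDerivOn a b f f') : ∀ᵐ x, x ∈ Ioc a b → deriv f x = f' x := by
  have hb : ∀ᵐ x, x ≠ b := by simp [ae_iff, measure_singleton]
  filter_upwards [hf.1.ae_hasDerivAt_integral, hb] with x hx hxb hmem
  have hx' : x ∈ Ioo a b := ⟨hmem.1, lt_of_le_of_ne hmem.2 hxb⟩
  have hloc : f =ᶠ[𝓝 x] fun y => f a + ∫ t in a..y, f' t :=
    eventually_of_mem (Ioo_mem_nhds hx'.1 hx'.2) fun y hy => hf.2 y (Ioo_subset_Icc_self hy)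
  exact (((hx (Icc_subset_uIcc (Ioo_subset_Icc_self hx')) a left_mem_uIcc).const_add
    (f a)).congr_of_eventuallyEq hloc).deriv

lemma integral_deriv_mul (hab : a ≤ b) (hf : ACDerivOn a b f f') (g : ℝ → ℂ) :
    ∫ x in a..b, deriv f x * g x = ∫ x in a..b, f' x * g x := by
  refine intervalIntegral.integral_congr_ae ?_
  filter_upwards [hf.ae_deriv_eq] with x hx hmem
  rw [hx (uIoc_of_le hab ▸ hmem)]

theorem integral_deriv_mul_eq_sub (hab : a ≤ b) (hf : ACDerivOn a b f f')
    (hg : ACDerivOn a b g g') :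
    ∫ x in a..b, f' x * g x = f b * g b - f a * g a - ∫ x in a..b, f x * g' x := by
  have hb : b ∈ Icc a b := right_mem_Icc.2 hab
  have hfg' : IntervalIntegrable (fun x => f x * g' x) volume a b :=
    (intervalIntegrable_iff_integrableOn_Icc_of_le hab).2
      (IntegrableOn.continuousOn_mul hf.continuousOn
        ((intervalIntegrable_iff_integrableOn_Icc_of_le hab).1 hg.1) isCompact_Icc)
  have hprod : IntegrableOn (uncurry fun x t => f' x * g' t) (triangle a b) :=
    integrableOn_triangle_mul (hf.integrableOn hab) (hg.integrableOn hab)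
  calc ∫ x in a..b, f' x * g x
      = ∫ x in a..b, (f' x * g a + ∫ t in a..x, f' x * g' t) := by
        refine intervalIntegral.integral_congr fun x hx => ?_
        rw [uIcc_of_le hab] at hx
        simp only [hg.2 x hx, mul_add, intervalIntegral.integral_const_mul]
    _ = (f b - f a) * g a + ∫ t in a..b, ∫ x in t..b, f' x * g' t := by
        rw [intervalIntegral.integral_add (hf.1.mul_const _)
          ((intervalIntegrable_iff_integrableOn_Ioc_of_le hab).2
            hprod.integrableOn_intervalIntegral_triangle),
          intervalIntegral.integral_mul_const, hf.integral_eq_sub (left_mem_Icc.2 hab) hb,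
          integral_integral_swap_triangle hab hprod]
    _ = (f b - f a) * g a + ∫ t in a..b, (f b * g' t - f t * g' t) := by
        congr 1
        refine intervalIntegral.integral_congr fun t ht => ?_
        rw [uIcc_of_le hab] at ht
        simp only [intervalIntegral.integral_mul_const, hf.integral_eq_sub ht hb, sub_mul]
    _ = f b * g b - f a * g a - ∫ x in a..b, f x * g' x := by
        rw [intervalIntegral.integral_sub (hg.1.const_mul _) hfg',
          intervalIntegral.integral_const_mul, hg.integral_eq_sub (left_mem_Icc.2 hab) hb]
        ring

theorem integral_mul_kernel (hab : a ≤ b) (hf : ACDerivOn a b f f')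
    (hk : IntegrableOn k (Icc 0 (b - a))) :
    ACDerivOn a b (fun x => ∫ t in a..x, f t * k (x - t))
      (fun x => f a * k (x - a) + ∫ t in a..x, f' t * k (x - t)) := by
  have hk_le : ∀ x ∈ Icc a b, IntegrableOn k (Icc 0 (x - a)) :=
    fun x hx => hk.mono_set (Icc_subset_Icc le_rfl (by linarith [hx.2]))
  have hk_right : ∀ x ∈ Icc a b, IntervalIntegrable (fun t => k (t - a)) volume a x := by
    intro x hx
    simpa using ((intervalIntegrable_iff_integrableOn_Icc_of_le (by linarith [hx.1])).2
      (hk_le x hx)).comp_sub_right a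
  have hk_left : ∀ x ∈ Icc a b, IntervalIntegrable (fun t => k (x - t)) volume a x := by
    intro x hx
    simpa using (((intervalIntegrable_iff_integrableOn_Icc_of_le (by linarith [hx.1])).2
      (hk_le x hx)).comp_sub_left x).symm
  have hconv : ∀ x ∈ Icc a b,
      IntegrableOn (uncurry fun t s => f' s * k (t - s)) (triangle a x) :=
    fun x hx => integrableOn_triangle_mul_sub
      ((hf.integrableOn hab).mono_set (Ioc_subset_Ioc le_rfl hx.2)) (hk_le x hx)
  refine ⟨(hk_right b (right_mem_Icc.2 hab)).const_mul _ |>.add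
    ((intervalIntegrable_iff_integrableOn_Ioc_of_le hab).2
      (hconv b (right_mem_Icc.2 hab)).integrableOn_intervalIntegral_triangle), fun x hx => ?_⟩
  -- both sides are `∫ y in 0..x - s, k y`
  have hkern : ∀ s, ∫ t in s..x, k (x - t) = ∫ t in s..x, k (t - s) := by
    simp [intervalIntegral.integral_comp_sub_left, intervalIntegral.integral_comp_sub_right]
  have hprod : IntegrableOn (uncurry fun t s => k (x - t) * f' s) (triangle a x) :=
    integrableOn_triangle_mul
      ((intervalIntegrable_iff_integrableOn_Ioc_of_le hx.1).1 (hk_left x hx))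
      ((hf.integrableOn hab).mono_set (Ioc_subset_Ioc le_rfl hx.2))
  simp only [intervalIntegral.integral_same, zero_add]
  calc ∫ t in a..x, f t * k (x - t)
      = ∫ t in a..x, (f a * k (x - t) + ∫ s in a..t, k (x - t) * f' s) := by
        refine intervalIntegral.integral_congr fun t ht => ?_
        rw [uIcc_of_le hx.1] at ht
        simp only [hf.2 t ⟨ht.1, ht.2.trans hx.2⟩, intervalIntegral.integral_const_mul]
        ring
    _ = (f a * ∫ t in a..x, k (x - t)) + ∫ s in a..x, ∫ t in s..x, k (x - t) * f' s := by
        rw [intervalIntegral.integral_add ((hk_left x hx).const_mul _)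
          ((intervalIntegrable_iff_integrableOn_Ioc_of_le hx.1).2
            hprod.integrableOn_intervalIntegral_triangle),
          intervalIntegral.integral_const_mul, integral_integral_swap_triangle hx.1 hprod]
    _ = (f a * ∫ t in a..x, k (t - a)) + ∫ s in a..x, ∫ t in s..x, f' s * k (t - s) := by
        rw [hkern a]
        congr 1
        refine intervalIntegral.integral_congr fun s _ => ?_
        rw [intervalIntegral.integral_mul_const, intervalIntegral.integral_const_mul, hkern s,
          mul_comm]
    _ = ∫ t in a..x, (f a * k (t - a) + ∫ s in a..t, f' s * k (t - s)) := by
        rw [intervalIntegral.integral_add ((hk_right x hx).const_mul _)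
          ((intervalIntegrable_iff_integrableOn_Ioc_of_le hx.1).2
            (hconv x hx).integrableOn_intervalIntegral_triangle),
          intervalIntegral.integral_const_mul, integral_integral_swap_triangle hx.1 (hconv x hx)]

end ACDerivOn

theorem left_fracDeriv_integration_by_parts_general
    (α l : ℝ) (hα1 : α < 1) (hl : 0 < l)
    (φ φ' ψ ψ' : ℝ → ℂ)
    (hφ : ACDerivOn 0 l φ φ') (hψ : ACDerivOn 0 l ψ ψ') :
    ∫ x in (0:ℝ)..l, RLDplus α 0 φ x * ψ x
      = ψ l * RLIplus (1 - α) 0 φ l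
        - ((1 / Real.Gamma (1 - α) : ℝ) : ℂ) *
            ∫ t in (0:ℝ)..l, φ t * ∫ x in t..l, ψ' x * (((x - t) ^ (-α) : ℝ) : ℂ) := by
  set c : ℂ := ((1 / Real.Gamma (1 - α) : ℝ) : ℂ)
  set k : ℝ → ℂ := fun y => ((y ^ (-α) : ℝ) : ℂ)
  have hk : IntegrableOn k (Icc 0 (l - 0)) :=
    ((intervalIntegrable_iff_integrableOn_Icc_of_le (by linarith)).1
      (intervalIntegral.intervalIntegrable_rpow' (by linarith))).ofReal
  have hI : RLIplus (1 - α) 0 φ = fun x => c * ∫ t in 0..x, φ t * k (x - t) := by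
    funext x
    simp only [RLIplus, sub_sub_cancel_left, c, k]
  have hF := (hφ.integral_mul_kernel hl.le hk).const_mul c
  rw [← hI] at hF
  obtain ⟨C, hC⟩ := isCompact_Icc.exists_bound_of_continuousOn hφ.continuousOn
  have hswap : ∫ x in 0..l, RLIplus (1 - α) 0 φ x * ψ' x
      = c * ∫ t in 0..l, φ t * ∫ x in t..l, ψ' x * k (x - t) := by
    simp only [hI, mul_assoc, intervalIntegral.integral_const_mul]
    exact congrArg (c * ·) (integral_intervalIntegral_mul_kernel_mul hl.le
      ((hφ.continuousOn.mono Ioc_subset_Icc_self).aestronglyMeasurable measurableSet_Ioc)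
      (fun t ht => hC t (Ioc_subset_Icc_self ht)) (hψ.integrableOn hl.le) hk)
  have hF0 : RLIplus (1 - α) 0 φ 0 = 0 := by simp [RLIplus]
  simp only [RLDplus]
  rw [hF.integral_deriv_mul hl.le, hF.integral_deriv_mul_eq_sub hl.le hψ, hswap, hF0]
  ring

/-- Integration by parts for the left fractional derivative: for `0 < α < 1`, `l > 0`,
and `φ, ψ` complex-valued absolutely continuous on `[0,l]` (with derivatives `φ', ψ'`),
`∫_0^l (D_{0+}^α φ) ψ = ψ(l)(I_{0+}^{1-α}φ)(l) - (1/Γ(1-α)) ∫_0^l φ(t) (∫_t^l ψ'(x)(x-t)^{-α} dx) dt`. -/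
theorem left_fracDeriv_integration_by_parts
    (α l : ℝ) (hα : 0 < α) (hα1 : α < 1) (hl : 0 < l)
    (φ φ' ψ ψ' : ℝ → ℂ)
    (hφ : ACDerivOn 0 l φ φ') (hψ : ACDerivOn 0 l ψ ψ') :
    ∫ x in (0:ℝ)..l, RLDplus α 0 φ x * ψ x
      = ψ l * RLIplus (1 - α) 0 φ l
        - ((1 / Real.Gamma (1 - α) : ℝ) : ℂ) *
            ∫ t in (0:ℝ)..l, φ t * ∫ x in t..l, ψ' x * (((x - t) ^ (-α) : ℝ) : ℂ) :=
  left_fracDeriv_integration_by_parts_general α l hα1 hl φ φ' ψ ψ' hφ hψ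
end

section
/- Reduction of the two-sided fractional eigenvalue equation to a Volterra integral equation: let 0 < α < 1, l > 0, k ∈ ℝ. Let φ be integrable on (0,l) such that F := I_{0+}^{1−α} φ is absolutely continuous on [δ,l] for every δ ∈ (0,l), the limit b := lim_{x→0+} F(x) exists, D_{l−}^α φ exists almost everywhere and is integrable on (0,l), and the equation (D_{0+}^α φ)(x) + (D_{l−}^α φ)(x) = k φ(x) holds for almost every x ∈ (0,l). Then for almost every x ∈ (0,l): φ(x) = (b/Γ(α)) x^{α−1} − (1/Γ(α)) ∫_0^x ( −k φ(s) + (D_{l−}^α φ)(s) )·(x−s)^{α−1} ds. -/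
open MeasureTheory Set Filter Topology

/-- Left Riemann–Liouville fractional integral of order `α` based at `a` (real-valued). -/
noncomputable def RLIplusR (α a : ℝ) (f : ℝ → ℝ) (x : ℝ) : ℝ :=
  (1 / Real.Gamma α) * ∫ t in a..x, f t * (x - t) ^ (α - 1)

/-- Right Riemann–Liouville fractional integral of order `α` based at `b` (real-valued). -/
noncomputable def RLIminusR (α b : ℝ) (f : ℝ → ℝ) (x : ℝ) : ℝ :=
  (1 / Real.Gamma α) * ∫ t in x..b, f t * (t - x) ^ (α - 1)

/-- Left Riemann–Liouville fractional derivative of order `α` (`0 < α < 1`), real-valued. -/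
noncomputable def RLDplusR (α a : ℝ) (f : ℝ → ℝ) (x : ℝ) : ℝ :=
  deriv (RLIplusR (1 - α) a f) x

/-- Right Riemann–Liouville fractional derivative of order `α` (`0 < α < 1`), real-valued. -/
noncomputable def RLDminusR (α b : ℝ) (f : ℝ → ℝ) (x : ℝ) : ℝ :=
  - deriv (RLIminusR (1 - α) b f) x

/-!
Put `ψ = k φ - D_{l-}^α φ`. The equation says `D_{0+}^α φ = ψ` a.e., so absolute continuity and
the limit at `0` give `I_{0+}^{1-α} φ = b + ∫_0^x ψ` on `(0, l)`. Applying `I_{0+}^α` and the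
semigroup law `I^q I^p = I^{p+q}` (Fubini on the triangle `s ≤ t` and the Beta integral) turns
the left side into `∫_0^x φ` and the right side into `∫_0^x G`, where `G` is the right-hand side
of the Volterra equation. Functions with the same primitive agree a.e. by Lebesgue's
differentiation theorem.
-/

section Kernels

variable {p q r c x : ℝ}

theorem integral_rpow_mul_sub_rpow {a : ℝ} (hp : 0 < p) (hq : 0 < q) (ha : 0 < a) :
    ∫ u in (0:ℝ)..a, u ^ (p - 1) * (a - u) ^ (q - 1)
      = a ^ (p + q - 1) * (Real.Gamma p * Real.Gamma q / Real.Gamma (p + q)) := by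
  have hbeta := Complex.betaIntegral_scaled p q ha
  rw [Complex.betaIntegral_eq_Gamma_mul_div _ _ (by simpa) (by simpa)] at hbeta
  apply Complex.ofReal_injective
  rw [← intervalIntegral.integral_ofReal]
  push_cast
  rw [← Complex.Gamma_ofReal, ← Complex.Gamma_ofReal, ← Complex.Gamma_ofReal,
    Complex.ofReal_cpow ha.le]
  push_cast
  rw [← hbeta]
  refine intervalIntegral.integral_congr fun u hu => ?_
  rw [uIcc_of_le ha.le] at hu
  rw [Complex.ofReal_cpow hu.1, Complex.ofReal_cpow (sub_nonneg.2 hu.2)]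
  push_cast
  rfl

theorem integral_sub_rpow_mul_sub_rpow (hp : 0 < p) (hq : 0 < q) (hcx : c < x) :
    ∫ t in c..x, (t - c) ^ (p - 1) * (x - t) ^ (q - 1)
      = (x - c) ^ (p + q - 1) * (Real.Gamma p * Real.Gamma q / Real.Gamma (p + q)) := by
  have hshift := intervalIntegral.integral_comp_sub_right
    (fun u => u ^ (p - 1) * ((x - c) - u) ^ (q - 1)) c (a := c) (b := x)
  simp only [sub_self, sub_sub_sub_cancel_right] at hshift
  rw [hshift, integral_rpow_mul_sub_rpow hp hq (sub_pos.2 hcx)]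

theorem intervalIntegrable_sub_rpow_mul_sub_rpow (hp : 0 < p) (hq : 0 < q) (hcx : c < x) :
    IntervalIntegrable (fun t => (t - c) ^ (p - 1) * (x - t) ^ (q - 1)) volume c x := by
  -- A non-integrable function has integral `0`, and the Beta integral is positive.
  refine intervalIntegral.intervalIntegrable_of_integral_ne_zero ?_
  rw [integral_sub_rpow_mul_sub_rpow hp hq hcx]
  have := Real.Gamma_pos_of_pos hp
  have := Real.Gamma_pos_of_pos hq
  have := Real.Gamma_pos_of_pos (add_pos hp hq)
  have := Real.rpow_pos_of_pos (sub_pos.2 hcx) (p + q - 1)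
  positivity

theorem intervalIntegrable_sub_rpow (hr : -1 < r) :
    IntervalIntegrable (fun t => (t - c) ^ r) volume c x := by
  simpa using (intervalIntegral.intervalIntegrable_rpow' (a := 0) (b := x - c) hr).comp_sub_right c

theorem intervalIntegrable_rpow_sub (hr : -1 < r) :
    IntervalIntegrable (fun t => (x - t) ^ r) volume c x := by
  simpa using
    ((intervalIntegral.intervalIntegrable_rpow' (a := 0) (b := x - c) hr).comp_sub_left x).symm

theorem integral_sub_rpow_sub_one (hp : 0 < p) :
    ∫ t in c..x, (t - c) ^ (p - 1) = (x - c) ^ p / p := by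
  rw [intervalIntegral.integral_comp_sub_right (fun t => t ^ (p - 1)), sub_self,
    integral_rpow (Or.inl (by linarith)), sub_add_cancel, Real.zero_rpow hp.ne', sub_zero]

end Kernels

/-- The integrand of `Γ(p) Γ(q) (I^q I^p f)(x)`, as a function of `(t, s)`. The indicator is
needed: `Real.rpow` does not vanish at negative bases. -/
noncomputable def rlDoubleIntegrand (f : ℝ → ℝ) (p q x : ℝ) : ℝ × ℝ → ℝ :=
  {z : ℝ × ℝ | z.2 ≤ z.1}.indicator
    fun z => f z.2 * ((z.1 - z.2) ^ (p - 1) * (x - z.1) ^ (q - 1))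

section RiemannLiouville

variable {f g : ℝ → ℝ} {p q c x : ℝ}

theorem integral_rlDoubleIntegrand_left {t : ℝ} (ht : t ∈ Ioo c x) :
    ∫ s, rlDoubleIntegrand f p q x (t, s) ∂volume.restrict (Ioo c x)
      = (∫ s in c..t, f s * (t - s) ^ (p - 1)) * (x - t) ^ (q - 1) := by
  have hsection : (fun s => rlDoubleIntegrand f p q x (t, s))
      = (Iic t).indicator fun s => f s * (t - s) ^ (p - 1) * (x - t) ^ (q - 1) := by
    ext s
    simp only [rlDoubleIntegrand, indicator, mem_ofPred_eq, mem_Iic, mul_assoc]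
  have hset : Iic t ∩ Ioo c x = Ioc c t := by
    ext s; simp only [mem_inter_iff, mem_Iic, mem_Ioo, mem_Ioc]; grind
  rw [hsection, MeasureTheory.integral_indicator measurableSet_Iic,
    Measure.restrict_restrict measurableSet_Iic, hset, integral_mul_const,
    intervalIntegral.integral_of_le ht.1.le]

theorem rlDoubleIntegrand_right_eq_indicator (s : ℝ) :
    (fun t => rlDoubleIntegrand f p q x (t, s))
      = (Ici s).indicator fun t => f s * ((t - s) ^ (p - 1) * (x - t) ^ (q - 1)) := by
  ext t
  simp only [rlDoubleIntegrand, indicator, mem_ofPred_eq, mem_Ici]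

theorem restrict_Ioo_restrict_Ici {s : ℝ} (hs : s ∈ Ioo c x) :
    (volume.restrict (Ioo c x)).restrict (Ici s) = volume.restrict (Ico s x) := by
  rw [Measure.restrict_restrict measurableSet_Ici]
  congr 1
  ext t; simp only [mem_inter_iff, mem_Ici, mem_Ioo, mem_Ico]; grind

theorem integrable_rlDoubleIntegrand_right (hp : 0 < p) (hq : 0 < q) {s : ℝ}
    (hs : s ∈ Ioo c x) :
    Integrable (fun t => rlDoubleIntegrand f p q x (t, s)) (volume.restrict (Ioo c x)) := by
  rw [rlDoubleIntegrand_right_eq_indicator, integrable_indicator_iff measurableSet_Ici,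
    IntegrableOn, restrict_Ioo_restrict_Ici hs, ← IntegrableOn,
    integrableOn_Ico_iff_integrableOn_Ioo, ← integrableOn_Ioc_iff_integrableOn_Ioo,
    ← intervalIntegrable_iff_integrableOn_Ioc_of_le hs.2.le]
  exact (intervalIntegrable_sub_rpow_mul_sub_rpow hp hq hs.2).const_mul _

theorem integral_rlDoubleIntegrand_right (hp : 0 < p) (hq : 0 < q) {s : ℝ} (hs : s ∈ Ioo c x) :
    ∫ t, rlDoubleIntegrand f p q x (t, s) ∂volume.restrict (Ioo c x)
      = f s * ((x - s) ^ (p + q - 1) * (Real.Gamma p * Real.Gamma q / Real.Gamma (p + q))) := by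
  rw [rlDoubleIntegrand_right_eq_indicator, MeasureTheory.integral_indicator measurableSet_Ici,
    restrict_Ioo_restrict_Ici hs, integral_const_mul, integral_Ico_eq_integral_Ioc,
    ← intervalIntegral.integral_of_le hs.2.le, integral_sub_rpow_mul_sub_rpow hp hq hs.2]

theorem norm_rlDoubleIntegrand {t s : ℝ} (ht : t ≤ x) :
    ‖rlDoubleIntegrand f p q x (t, s)‖ = rlDoubleIntegrand (fun s => ‖f s‖) p q x (t, s) := by
  simp only [rlDoubleIntegrand, norm_indicator_eq_indicator_norm]
  by_cases hst : s ≤ t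
  · simp only [indicator, mem_ofPred_eq, hst, if_true, norm_mul, Real.norm_eq_abs,
      abs_of_nonneg (Real.rpow_nonneg (sub_nonneg.2 hst) _),
      abs_of_nonneg (Real.rpow_nonneg (sub_nonneg.2 ht) _)]
  · simp only [indicator, mem_ofPred_eq, hst, if_false]

theorem integrable_rlDoubleIntegrand (hp : 0 < p) (hq : 0 < q) (hpq : 1 ≤ p + q)
    (hf : IntervalIntegrable f volume c x) :
    Integrable (rlDoubleIntegrand f p q x)
      ((volume.restrict (Ioo c x)).prod (volume.restrict (Ioo c x))) := by
  set μ := volume.restrict (Ioo c x)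
  have hmeas : AEStronglyMeasurable (rlDoubleIntegrand f p q x) (μ.prod μ) := by
    refine AEStronglyMeasurable.indicator ?_ (measurableSet_le measurable_snd measurable_fst)
    exact (hf.1.mono_set Ioo_subset_Ioc_self).aestronglyMeasurable.comp_snd.mul
      (by fun_prop : Measurable fun z : ℝ × ℝ =>
        (z.1 - z.2) ^ (p - 1) * (x - z.1) ^ (q - 1)).aestronglyMeasurable
  have hmem : ∀ᵐ s ∂μ, s ∈ Ioo c x := ae_restrict_mem measurableSet_Ioo
  rw [integrable_prod_iff' hmeas]
  refine ⟨hmem.mono fun s hs => integrable_rlDoubleIntegrand_right hp hq hs, ?_⟩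
  have hnorm : ∀ s ∈ Ioo c x, ∫ t, ‖rlDoubleIntegrand f p q x (t, s)‖ ∂μ
      = ‖f s‖ * ((x - s) ^ (p + q - 1) * (Real.Gamma p * Real.Gamma q / Real.Gamma (p + q))) := by
    intro s hs
    rw [← integral_rlDoubleIntegrand_right (f := fun s => ‖f s‖) hp hq hs]
    refine integral_congr_ae ?_
    filter_upwards [hmem] with t ht
    exact norm_rlDoubleIntegrand ht.2.le
  -- `1 ≤ p + q` keeps `(x - s) ^ (p + q - 1)` bounded, so `f ∈ L¹` suffices.
  have hbound : IntervalIntegrable (fun s => ‖f s‖ * ((x - s) ^ (p + q - 1)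
      * (Real.Gamma p * Real.Gamma q / Real.Gamma (p + q)))) volume c x :=
    hf.norm.mul_continuousOn (by
      have := Real.continuous_rpow_const (sub_nonneg.2 hpq)
      fun_prop)
  refine (hbound.1.mono_set Ioo_subset_Ioc_self).congr ?_
  filter_upwards [hmem] with s hs
  exact (hnorm s hs).symm

theorem intervalIntegrable_RLIplusR_mul_rpow (hp : 0 < p) (hq : 0 < q) (hpq : 1 ≤ p + q)
    (hcx : c ≤ x) (hf : IntervalIntegrable f volume c x) :
    IntervalIntegrable (fun t => RLIplusR p c f t * (x - t) ^ (q - 1)) volume c x := by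
  rw [intervalIntegrable_iff_integrableOn_Ioo_of_le hcx]
  refine (((integrable_rlDoubleIntegrand hp hq hpq hf).integral_prod_left).const_mul
    (1 / Real.Gamma p)).congr ?_
  filter_upwards [ae_restrict_mem measurableSet_Ioo] with t ht
  rw [integral_rlDoubleIntegrand_left ht, RLIplusR, mul_assoc]

theorem intervalIntegrable_RLIplusR (hp : 0 < p) (hcx : c ≤ x)
    (hf : IntervalIntegrable f volume c x) :
    IntervalIntegrable (RLIplusR p c f) volume c x := by
  simpa using intervalIntegrable_RLIplusR_mul_rpow hp one_pos (by linarith) hcx hf (q := 1)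

theorem RLIplusR_RLIplusR (hp : 0 < p) (hq : 0 < q) (hpq : 1 ≤ p + q) (hcx : c ≤ x)
    (hf : IntervalIntegrable f volume c x) :
    RLIplusR q c (RLIplusR p c f) x = RLIplusR (p + q) c f x := by
  set μ := volume.restrict (Ioo c x)
  set B := Real.Gamma p * Real.Gamma q / Real.Gamma (p + q) with hB
  have hswap := integral_integral_swap (f := fun t s => rlDoubleIntegrand f p q x (t, s))
    (integrable_rlDoubleIntegrand hp hq hpq hf)
  have := (Real.Gamma_pos_of_pos hp).ne'
  have := (Real.Gamma_pos_of_pos hq).ne'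
  have := (Real.Gamma_pos_of_pos (add_pos hp hq)).ne'
  calc RLIplusR q c (RLIplusR p c f) x
      = 1 / Real.Gamma q * (1 / Real.Gamma p
          * ∫ t, ∫ s, rlDoubleIntegrand f p q x (t, s) ∂μ ∂μ) := by
        rw [RLIplusR, intervalIntegral.integral_of_le hcx, integral_Ioc_eq_integral_Ioo]
        congr 1
        rw [← integral_const_mul]
        refine setIntegral_congr_fun measurableSet_Ioo fun t ht => ?_
        rw [integral_rlDoubleIntegrand_left ht, RLIplusR, mul_assoc]
    _ = 1 / Real.Gamma q * (1 / Real.Gamma p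
          * ∫ s, ∫ t, rlDoubleIntegrand f p q x (t, s) ∂μ ∂μ) := by
        rw [hswap]
    _ = 1 / Real.Gamma q * (1 / Real.Gamma p
          * ∫ s in Ioo c x, B * (f s * (x - s) ^ (p + q - 1))) := by
        congr 2
        refine setIntegral_congr_fun measurableSet_Ioo fun s hs => ?_
        rw [integral_rlDoubleIntegrand_right hp hq hs]
        ring
    _ = RLIplusR (p + q) c f x := by
        rw [integral_const_mul, RLIplusR, intervalIntegral.integral_of_le hcx,
          integral_Ioc_eq_integral_Ioo, hB]
        field_simp

theorem RLIplusR_one : RLIplusR 1 c f x = ∫ t in c..x, f t := by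
  simp [RLIplusR]

theorem RLIplusR_congr (hcx : c ≤ x) (h : EqOn f g (Ioo c x)) :
    RLIplusR p c f x = RLIplusR p c g x := by
  rw [RLIplusR, RLIplusR, intervalIntegral.integral_of_le hcx, intervalIntegral.integral_of_le hcx,
    integral_Ioc_eq_integral_Ioo, integral_Ioc_eq_integral_Ioo]
  congr 1
  exact setIntegral_congr_fun measurableSet_Ioo fun t ht => by rw [h ht]

theorem RLIplusR_add (hf : IntervalIntegrable (fun t => f t * (x - t) ^ (p - 1)) volume c x)
    (hg : IntervalIntegrable (fun t => g t * (x - t) ^ (p - 1)) volume c x) :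
    RLIplusR p c (fun t => f t + g t) x = RLIplusR p c f x + RLIplusR p c g x := by
  simp only [RLIplusR, add_mul, intervalIntegral.integral_add hf hg, mul_add]

theorem RLIplusR_const (hp : 0 < p) (b : ℝ) :
    RLIplusR p c (fun _ => b) x = b / Real.Gamma p * ((x - c) ^ p / p) := by
  rw [RLIplusR, intervalIntegral.integral_const_mul,
    intervalIntegral.integral_comp_sub_left (fun t => t ^ (p - 1)), sub_self,
    integral_rpow (Or.inl (by linarith)), sub_add_cancel, Real.zero_rpow hp.ne', sub_zero]
  ring

end RiemannLiouville

theorem integral_eq_of_RLIplusR_eq_add_integral {φ ψ : ℝ → ℝ} {α b c x : ℝ} (hα : 0 < α)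
    (hα1 : α < 1) (hcx : c ≤ x) (hφ : IntervalIntegrable φ volume c x)
    (hψ : IntervalIntegrable ψ volume c x)
    (hF : ∀ t ∈ Ioo c x, RLIplusR (1 - α) c φ t = b + ∫ s in c..t, ψ s) :
    ∫ t in c..x, φ t
      = ∫ t in c..x, (b / Real.Gamma α * (t - c) ^ (α - 1) + RLIplusR α c ψ t) := by
  calc ∫ t in c..x, φ t = RLIplusR α c (RLIplusR (1 - α) c φ) x := by
        rw [RLIplusR_RLIplusR (by linarith) hα (by linarith) hcx hφ, sub_add_cancel, RLIplusR_one]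
    _ = RLIplusR α c (fun t => b + RLIplusR 1 c ψ t) x :=
        RLIplusR_congr hcx fun t ht => by rw [hF t ht, RLIplusR_one]
    _ = RLIplusR α c (fun _ => b) x + RLIplusR α c (RLIplusR 1 c ψ) x :=
        RLIplusR_add ((intervalIntegrable_rpow_sub (by linarith)).const_mul b)
          (intervalIntegrable_RLIplusR_mul_rpow one_pos hα (by linarith) hcx hψ)
    _ = b / Real.Gamma α * ((x - c) ^ α / α) + RLIplusR 1 c (RLIplusR α c ψ) x := by
        rw [RLIplusR_const hα, RLIplusR_RLIplusR one_pos hα (by linarith) hcx hψ,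
          RLIplusR_RLIplusR hα one_pos (by linarith) hcx hψ, add_comm 1 α]
    _ = ∫ t in c..x, (b / Real.Gamma α * (t - c) ^ (α - 1) + RLIplusR α c ψ t) := by
        rw [intervalIntegral.integral_add ((intervalIntegrable_sub_rpow (by linarith)).const_mul _)
          (intervalIntegrable_RLIplusR hα hcx hψ), intervalIntegral.integral_const_mul,
          integral_sub_rpow_sub_one hα, RLIplusR_one]

theorem eq_add_integral_of_tendsto_nhdsGT {F g : ℝ → ℝ} {a l b : ℝ}
    (hg : IntervalIntegrable g volume a l)
    (hF : ∀ δ ∈ Ioo a l, ∀ x ∈ Icc δ l, F x = F δ + ∫ t in δ..x, g t)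
    (hb : Tendsto F (𝓝[>] a) (𝓝 b)) :
    ∀ x ∈ Ioc a l, F x = b + ∫ t in a..x, g t := by
  intro x hx
  have hal : a ≤ l := hx.1.le.trans hx.2
  have hsub : ∀ y ∈ Icc a l, IntervalIntegrable g volume a y := fun y hy =>
    hg.mono_set (uIcc_subset_uIcc left_mem_uIcc (mem_uIcc_of_le hy.1 hy.2))
  have hprim : Tendsto (fun δ => ∫ t in a..δ, g t) (𝓝[>] a) (𝓝 0) := by
    have hcont := intervalIntegral.continuousOn_primitive_interval' hg left_mem_uIcc a
      left_mem_uIcc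
    rw [uIcc_of_le hal] at hcont
    simpa using (hcont.mono_of_mem_nhdsWithin
      (Icc_mem_nhdsGT_of_mem ⟨le_rfl, hx.1.trans_le hx.2⟩)).tendsto
  have hconst : ∀ᶠ δ in 𝓝[>] a, F x - ∫ t in a..x, g t = F δ - ∫ t in a..δ, g t := by
    filter_upwards [Ioo_mem_nhdsGT hx.1] with δ hδ
    rw [hF δ ⟨hδ.1, hδ.2.trans_le hx.2⟩ x ⟨hδ.2.le, hx.2⟩,
      ← intervalIntegral.integral_interval_sub_left (hsub x ⟨hx.1.le, hx.2⟩)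
        (hsub δ ⟨hδ.1.le, hδ.2.le.trans hx.2⟩)]
    ring
  have := tendsto_nhds_unique (tendsto_const_nhds.congr' hconst) (hb.sub hprim)
  linarith

theorem ae_eq_of_forall_intervalIntegral_eq {f g : ℝ → ℝ} {a b : ℝ}
    (hf : IntervalIntegrable f volume a b) (hg : IntervalIntegrable g volume a b)
    (h : ∀ x ∈ Ioo a b, ∫ t in a..x, f t = ∫ t in a..x, g t) :
    ∀ᵐ x, x ∈ Ioo a b → f x = g x := by
  filter_upwards [hf.ae_hasDerivAt_integral, hg.ae_hasDerivAt_integral] with x hfx hgx hx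
  have hx' : x ∈ uIcc a b := Ioo_subset_Icc_self.trans Icc_subset_uIcc hx
  have hprim : (fun y => ∫ t in a..y, f t) =ᶠ[𝓝 x] fun y => ∫ t in a..y, g t :=
    Filter.mem_of_superset (Ioo_mem_nhds hx.1 hx.2) h
  exact (hfx hx' a left_mem_uIcc).unique ((hgx hx' a left_mem_uIcc).congr_of_eventuallyEq hprim)

/-- Reduction of the two-sided fractional eigenvalue equation
`(D_{0+}^α φ)(x) + (D_{l-}^α φ)(x) = k φ(x)` (a.e. on `(0,l)`) to the Volterra integral
equation `φ(x) = (b/Γ(α)) x^{α-1} - (1/Γ(α)) ∫_0^x (-kφ(s) + (D_{l-}^α φ)(s)) (x-s)^{α-1} ds`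
(a.e. on `(0,l)`), where `b = lim_{x→0+} (I_{0+}^{1-α} φ)(x)`. -/
theorem fractional_eigen_eq_to_volterra
    (α l k : ℝ) (hα : 0 < α) (hα1 : α < 1) (hl : 0 < l)
    (φ : ℝ → ℝ) (b : ℝ)
    (hφint : IntervalIntegrable φ MeasureTheory.volume 0 l)
    (hacF : ∀ δ ∈ Set.Ioo 0 l, ∀ x ∈ Set.Icc δ l,
      RLIplusR (1 - α) 0 φ x = RLIplusR (1 - α) 0 φ δ + ∫ t in δ..x, RLDplusR α 0 φ t)
    (hblim : Filter.Tendsto (RLIplusR (1 - α) 0 φ) (nhdsWithin 0 (Set.Ioi 0)) (nhds b))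
    (hDmint : IntervalIntegrable (RLDminusR α l φ) MeasureTheory.volume 0 l)
    (heq : ∀ᵐ x ∂(MeasureTheory.volume), x ∈ Set.Ioo 0 l →
      RLDplusR α 0 φ x + RLDminusR α l φ x = k * φ x) :
    ∀ᵐ x ∂(MeasureTheory.volume), x ∈ Set.Ioo 0 l →
      φ x = (b / Real.Gamma α) * x ^ (α - 1)
        - (1 / Real.Gamma α) *
            ∫ s in (0:ℝ)..x, (-(k * φ s) + RLDminusR α l φ s) * (x - s) ^ (α - 1) := by
  set ψ : ℝ → ℝ := fun s => k * φ s - RLDminusR α l φ s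
  have hψint : IntervalIntegrable ψ volume 0 l := (hφint.const_mul k).sub hDmint
  have hacψ : ∀ δ ∈ Ioo 0 l, ∀ x ∈ Icc δ l,
      RLIplusR (1 - α) 0 φ x = RLIplusR (1 - α) 0 φ δ + ∫ t in δ..x, ψ t := by
    intro δ hδ x hx
    rw [hacF δ hδ x hx, intervalIntegral.integral_congr_ae]
    filter_upwards [heq, Measure.ae_ne volume l] with t ht htl hmem
    rw [uIoc_of_le hx.1] at hmem
    linarith [ht ⟨hδ.1.trans hmem.1, (hmem.2.trans hx.2).lt_of_ne htl⟩]
  have hF := eq_add_integral_of_tendsto_nhdsGT hψint hacψ hblim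
  have hGint : IntervalIntegrable (fun t => b / Real.Gamma α * (t - 0) ^ (α - 1)
      + RLIplusR α 0 ψ t) volume 0 l :=
    ((intervalIntegrable_sub_rpow (by linarith)).const_mul _).add
      (intervalIntegrable_RLIplusR hα hl.le hψint)
  have hprim : ∀ x ∈ Ioo 0 l, ∫ t in 0..x, φ t
      = ∫ t in 0..x, (b / Real.Gamma α * (t - 0) ^ (α - 1) + RLIplusR α 0 ψ t) := by
    intro x hx
    have hsub : uIcc 0 x ⊆ uIcc 0 l :=
      uIcc_subset_uIcc left_mem_uIcc (mem_uIcc_of_le hx.1.le hx.2.le)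
    exact integral_eq_of_RLIplusR_eq_add_integral hα hα1 hx.1.le (hφint.mono_set hsub)
      (hψint.mono_set hsub) fun t ht => hF t ⟨ht.1, ht.2.le.trans hx.2.le⟩
  filter_upwards [ae_eq_of_forall_intervalIntegral_eq hφint hGint hprim] with x hx hmem
  have hneg : ∫ s in (0:ℝ)..x, (-(k * φ s) + RLDminusR α l φ s) * (x - s) ^ (α - 1)
      = -∫ s in (0:ℝ)..x, ψ s * (x - s) ^ (α - 1) := by
    rw [← intervalIntegral.integral_neg]
    congr 1 with s
    ring
  rw [hx hmem, RLIplusR, hneg, sub_zero]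
  ring
end

section
/- The Mittag-Leffler function solves the homogeneous right-sided fractional equation: let 0 < α < 1, l > 0, k ∈ ℝ, and define φ(s) := (l−s)^{α−1} · E_{α,α}(k (l−s)^α) for s ∈ (0,l), where E_{α,α}(z) := Σ_{n=0}^∞ z^n / Γ(αn + α). Then for every s ∈ (0,l), (D_{l−}^α φ)(s) = k φ(s). -/
/-!
Write `ψ_β(s) = (l - s)^(β-1) E_{α,β}(k (l - s)^α) = ∑ kⁿ (l - s)^(αn+β-1) / Γ(αn+β)`, so that
`φ = ψ_α`. Integrating term by term with the Beta integral gives `I_{l-}^μ ψ_β = ψ_{β+μ}`; in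
particular `I_{l-}^{1-α} φ = ψ_1 = E_{α,1}(k (l - s)^α)`. Differentiating this series term by
term, `Γ(α(m+1)+1) = α(m+1) Γ(αm+α)` turns `E_{α,1}'` into `E_{α,α} / α`, and the chain rule
gives `-(d/ds) ψ_1 = k ψ_α`.
-/

open MeasureTheory Set Filter Topology

/-- The two-parameter Mittag-Leffler function `E_{α,β}(x) = Σ_{n=0}^∞ xⁿ / Γ(αn + β)`
(real argument). -/
noncomputable def mittagLeffler (α β x : ℝ) : ℝ :=
  ∑' n : ℕ, x ^ n / Real.Gamma (α * n + β)

lemma rpow_sub_two_le_exp_mul_Gamma {r x : ℝ} (hr : 1 ≤ r) (hx : 2 ≤ x) :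
    r ^ (x - 2) ≤ Real.exp r * Real.Gamma x := by
  set m := ⌊x - 1⌋₊
  have hm_le : (m : ℝ) ≤ x - 1 := Nat.floor_le (by linarith)
  have hm_gt : x - 1 < m + 1 := Nat.lt_floor_add_one _
  have hm_one : (1 : ℝ) ≤ m := by exact_mod_cast Nat.le_floor (by norm_num; linarith)
  calc r ^ (x - 2) ≤ r ^ (m : ℝ) := Real.rpow_le_rpow_of_exponent_le hr (by linarith)
    _ = r ^ m := Real.rpow_natCast r m
    _ ≤ Real.exp r * m.factorial := by
      have := Real.pow_div_factorial_le_exp (x := r) (by linarith) m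
      rwa [div_le_iff₀ (by positivity)] at this
    _ = Real.exp r * Real.Gamma (m + 1) := by rw [Real.Gamma_nat_eq_factorial]
    _ ≤ Real.exp r * Real.Gamma x := by
      gcongr
      exact Real.Gamma_strictMonoOn_Ici.monotoneOn (by simp; linarith) (by simp; linarith)
        (by linarith)

lemma summable_pow_div_Gamma {a : ℝ} (ha : 0 < a) (b c : ℝ) :
    Summable fun n : ℕ ↦ c ^ n / Real.Gamma (a * n + b) := by
  set r := (|c| + 1) ^ a⁻¹
  have hr : 1 ≤ r := Real.one_le_rpow (by linarith [abs_nonneg c]) (by positivity)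
  have hra : r ^ a = |c| + 1 := by
    rw [← Real.rpow_mul (by positivity), inv_mul_cancel₀ ha.ne', Real.rpow_one]
  have hgeom : Summable fun n : ℕ ↦ Real.exp r * r ^ (2 - b) * (|c| / (|c| + 1)) ^ n :=
    (summable_geometric_of_lt_one (by positivity)
      ((div_lt_one (by positivity)).2 (lt_add_one _))).mul_left _
  refine hgeom.of_norm_bounded_eventually_nat ?_
  obtain ⟨N, hN⟩ := exists_nat_ge ((2 - b) / a)
  filter_upwards [eventually_ge_atTop N] with n hn
  have hx : 2 ≤ a * n + b := by
    have := (div_le_iff₀ ha).1 (hN.trans (Nat.cast_le.2 hn)); linarith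
  have hΓ := rpow_sub_two_le_exp_mul_Gamma hr hx
  have hΓpos : 0 < Real.Gamma (a * n + b) := Real.Gamma_pos_of_pos (by linarith)
  have hr0 : 0 < r := by linarith
  rw [norm_div, norm_pow, Real.norm_eq_abs, Real.norm_of_nonneg hΓpos.le,
    div_le_iff₀ hΓpos]
  calc |c| ^ n = |c| ^ n / (|c| + 1) ^ n * r ^ (a * n + b - 2) * r ^ (2 - b) := by
        rw [mul_assoc, ← Real.rpow_add hr0, show a * n + b - 2 + (2 - b) = a * n by ring, ← hra,
          ← Real.rpow_natCast (r ^ a), ← Real.rpow_mul hr0.le,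
          div_mul_cancel₀ _ (Real.rpow_pos_of_pos hr0 _).ne']
    _ ≤ |c| ^ n / (|c| + 1) ^ n * (Real.exp r * Real.Gamma (a * n + b)) * r ^ (2 - b) := by
        gcongr
    _ = _ := by rw [div_pow]; ring

lemma integral_rpow_mul_one_sub_rpow {u v : ℝ} (hu : 0 < u) (hv : 0 < v) :
    ∫ x in (0 : ℝ)..1, x ^ (u - 1) * (1 - x) ^ (v - 1) =
      Real.Gamma u * Real.Gamma v / Real.Gamma (u + v) := by
  have hbeta : Complex.betaIntegral u v
      = ((∫ x in (0 : ℝ)..1, x ^ (u - 1) * (1 - x) ^ (v - 1) : ℝ) : ℂ) := by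
    rw [Complex.betaIntegral, ← intervalIntegral.integral_ofReal]
    refine intervalIntegral.integral_congr fun x hx ↦ ?_
    rw [uIcc_of_le zero_le_one] at hx
    push_cast
    rw [Complex.ofReal_cpow hx.1, Complex.ofReal_cpow (by linarith [hx.2])]
    push_cast
    rfl
  have key := Complex.Gamma_mul_Gamma_eq_betaIntegral (s := u) (t := v)
    (by simpa using hu) (by simpa using hv)
  rw [hbeta, ← Complex.ofReal_add, Complex.Gamma_ofReal, Complex.Gamma_ofReal,
    Complex.Gamma_ofReal, ← Complex.ofReal_mul, ← Complex.ofReal_mul, Complex.ofReal_inj] at key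
  rw [key, mul_div_cancel_left₀ _ (Real.Gamma_pos_of_pos (by linarith)).ne']

lemma integral_sub_rpow_mul_sub_rpow_s14 {a b u v : ℝ} (hab : a < b) (hu : 0 < u) (hv : 0 < v) :
    ∫ t in a..b, (b - t) ^ (u - 1) * (t - a) ^ (v - 1) =
      (b - a) ^ (u + v - 1) * (Real.Gamma u * Real.Gamma v / Real.Gamma (u + v)) := by
  have hba : 0 < b - a := by linarith
  have hsub := intervalIntegral.integral_comp_mul_add (a := 0) (b := 1)
    (fun t ↦ (b - t) ^ (u - 1) * (t - a) ^ (v - 1)) hba.ne' a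
  simp only [mul_zero, zero_add, mul_one, sub_add_cancel, smul_eq_mul] at hsub
  rw [eq_inv_mul_iff_mul_eq₀ hba.ne'] at hsub
  rw [← hsub, mul_comm (Real.Gamma u), add_comm u v, ← integral_rpow_mul_one_sub_rpow hv hu,
    ← intervalIntegral.integral_const_mul, ← intervalIntegral.integral_const_mul]
  refine intervalIntegral.integral_congr fun x hx ↦ ?_
  rw [uIcc_of_le zero_le_one] at hx
  rw [show b - ((b - a) * x + a) = (b - a) * (1 - x) by ring, add_sub_cancel_right,
    Real.mul_rpow hba.le (by linarith [hx.2]), Real.mul_rpow hba.le hx.1,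
    show v + u - 1 = (u - 1) + (v - 1) + 1 by ring, Real.rpow_add hba, Real.rpow_add hba,
    Real.rpow_one]
  ring

lemma succ_div_Gamma_mul_succ_add_one {α : ℝ} (hα : 0 < α) (m : ℕ) :
    ((m + 1 : ℕ) : ℝ) / Real.Gamma (α * (m + 1 : ℕ) + 1) = (α * Real.Gamma (α * m + α))⁻¹ := by
  have hpos : 0 < α * (m + 1 : ℕ) := by positivity
  rw [Real.Gamma_add_one hpos.ne', show α * (m + 1 : ℕ) = α * m + α by push_cast; ring]
  have : Real.Gamma (α * m + α) ≠ 0 := by positivity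
  field_simp
  push_cast
  ring

lemma hasDerivAt_mittagLeffler_one {α : ℝ} (hα : 0 < α) (z : ℝ) :
    HasDerivAt (mittagLeffler α 1) (mittagLeffler α α z / α) z := by
  set R := |z| + 1
  have hderiv : ∀ (n : ℕ) w, HasDerivAt (fun w : ℝ ↦ w ^ n / Real.Gamma (α * n + 1))
      (n * w ^ (n - 1) / Real.Gamma (α * n + 1)) w := fun n w ↦
    (hasDerivAt_pow n w).div_const _
  have hshift : ∀ w : ℝ, (fun m : ℕ ↦ ((m + 1 : ℕ) : ℝ) * w ^ (m + 1 - 1) /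
      Real.Gamma (α * (m + 1 : ℕ) + 1)) = fun m : ℕ ↦ α⁻¹ * (w ^ m / Real.Gamma (α * m + α)) := by
    intro w
    funext m
    rw [Nat.add_sub_cancel, mul_comm, mul_div_assoc, succ_div_Gamma_mul_succ_add_one hα, mul_inv]
    ring
  have hbound_summable : Summable fun n : ℕ ↦ n * R ^ (n - 1) / Real.Gamma (α * n + 1) := by
    rw [← summable_nat_add_iff 1, hshift]
    exact (summable_pow_div_Gamma hα α R).mul_left _
  have hbound : ∀ (n : ℕ), ∀ w ∈ Metric.ball (0 : ℝ) R,
      ‖n * w ^ (n - 1) / Real.Gamma (α * n + 1)‖ ≤ n * R ^ (n - 1) / Real.Gamma (α * n + 1) := by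
    intro n w hw
    have hΓ : 0 < Real.Gamma (α * n + 1) := by positivity
    rw [mem_ball_zero_iff] at hw
    rw [norm_div, norm_mul, norm_pow, Real.norm_natCast, Real.norm_of_nonneg hΓ.le]
    gcongr
  have hz : z ∈ Metric.ball (0 : ℝ) R := by simp [R]
  have hsum : ∑' n : ℕ, n * z ^ (n - 1) / Real.Gamma (α * n + 1) = mittagLeffler α α z / α := by
    rw [(hbound_summable.of_norm_bounded (fun n ↦ hbound n z hz)).tsum_eq_zero_add, hshift,
      tsum_mul_left, mittagLeffler]
    simp [div_eq_inv_mul]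
  rw [← hsum]
  exact hasDerivAt_tsum_of_isPreconnected hbound_summable Metric.isOpen_ball
    (convex_ball _ _).isPreconnected (fun n w _ ↦ hderiv n w) hbound hz
    (summable_pow_div_Gamma hα 1 z) hz

lemma rpow_mul_mul_rpow_pow {y : ℝ} (hy : 0 < y) (γ α k : ℝ) (n : ℕ) :
    y ^ γ * (k * y ^ α) ^ n = k ^ n * y ^ (α * n + γ) := by
  rw [mul_pow, ← Real.rpow_natCast (y ^ α), ← Real.rpow_mul hy.le, mul_left_comm,
    ← Real.rpow_add hy, add_comm]

lemma RLIminusR_rpow_mul_mittagLeffler {α β μ b x : ℝ} (k : ℝ) (hα : 0 < α) (hβ : 0 < β)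
    (hμ : 0 < μ) (hx : x < b) :
    RLIminusR μ b (fun t ↦ (b - t) ^ (β - 1) * mittagLeffler α β (k * (b - t) ^ α)) x =
      (b - x) ^ (β + μ - 1) * mittagLeffler α (β + μ) (k * (b - x) ^ α) := by
  -- Integrals are taken over `Ioo x b`: at `t = b` the termwise expansion of the integrand can
  -- fail, since `0 ^ (0 : ℝ) = 1`.
  set p : ℕ → ℝ → ℝ := fun n t ↦ (b - t) ^ (α * n + β - 1) * (t - x) ^ (μ - 1)
  have hp_integral : ∀ n : ℕ, ∫ t in Ioo x b, p n t = (b - x) ^ (α * n + (β + μ) - 1) *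
      (Real.Gamma (α * n + β) * Real.Gamma μ / Real.Gamma (α * n + (β + μ))) := fun n ↦ by
    rw [← integral_Ioc_eq_integral_Ioo, ← intervalIntegral.integral_of_le hx.le, ← add_assoc]
    exact integral_sub_rpow_mul_sub_rpow_s14 hx (by positivity) hμ
  have hp_integrable : ∀ n : ℕ, IntegrableOn (p n) (Ioo x b) := fun n ↦
    Integrable.of_integral_ne_zero <| by
      rw [hp_integral]
      have : 0 < b - x := sub_pos.2 hx
      positivity
  have hterm : ∀ (d : ℝ) (n : ℕ), ∫ t in Ioo x b, d ^ n / Real.Gamma (α * n + β) * p n t =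
      Real.Gamma μ * ((b - x) ^ (β + μ - 1) *
        ((d * (b - x) ^ α) ^ n / Real.Gamma (α * n + (β + μ)))) := fun d n ↦ by
    rw [integral_const_mul, hp_integral, ← mul_div_assoc ((b - x) ^ (β + μ - 1)),
      rpow_mul_mul_rpow_pow (sub_pos.2 hx), show α * n + (β + μ - 1) = α * n + (β + μ) - 1 by ring]
    have : Real.Gamma (α * n + β) ≠ 0 := by positivity
    field_simp
  have hnorm_summable :
      Summable fun n : ℕ ↦ ∫ t in Ioo x b, ‖k ^ n / Real.Gamma (α * n + β) * p n t‖ := by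
    have hnorm : ∀ n : ℕ, ∫ t in Ioo x b, ‖k ^ n / Real.Gamma (α * n + β) * p n t‖ =
        ∫ t in Ioo x b, |k| ^ n / Real.Gamma (α * n + β) * p n t := fun n ↦
      setIntegral_congr_fun measurableSet_Ioo fun t ht ↦ by
        have hΓpos : 0 < Real.Gamma (α * n + β) := by positivity
        have hp_nonneg : 0 ≤ p n t := by
          have := sub_pos.2 ht.1; have := sub_pos.2 ht.2; positivity
        rw [norm_mul, norm_div, norm_pow, Real.norm_of_nonneg hp_nonneg,
          Real.norm_of_nonneg hΓpos.le, Real.norm_eq_abs]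
    simp_rw [hnorm, hterm]
    exact ((summable_pow_div_Gamma hα (β + μ) (|k| * (b - x) ^ α)).mul_left
      ((b - x) ^ (β + μ - 1))).mul_left (Real.Gamma μ)
  have hseries : ∀ t ∈ Ioo x b, (b - t) ^ (β - 1) * mittagLeffler α β (k * (b - t) ^ α) *
      (t - x) ^ (μ - 1) = ∑' n : ℕ, k ^ n / Real.Gamma (α * n + β) * p n t := fun t ht ↦ by
    rw [mittagLeffler, ← tsum_mul_left, ← tsum_mul_right]
    refine tsum_congr fun n ↦ ?_
    rw [← mul_div_assoc, rpow_mul_mul_rpow_pow (sub_pos.2 ht.2),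
      show α * n + (β - 1) = α * n + β - 1 by ring]
    ring
  calc RLIminusR μ b (fun t ↦ (b - t) ^ (β - 1) * mittagLeffler α β (k * (b - t) ^ α)) x
      = 1 / Real.Gamma μ * ∫ t in Ioo x b, ∑' n : ℕ, k ^ n / Real.Gamma (α * n + β) * p n t := by
        rw [RLIminusR, intervalIntegral.integral_of_le hx.le, integral_Ioc_eq_integral_Ioo,
          setIntegral_congr_fun measurableSet_Ioo hseries]
    _ = 1 / Real.Gamma μ * ∑' n : ℕ, ∫ t in Ioo x b, k ^ n / Real.Gamma (α * n + β) * p n t := by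
        rw [integral_tsum_of_summable_integral_norm
          (fun n ↦ (hp_integrable n).const_mul _) hnorm_summable]
    _ = _ := by
        simp_rw [hterm, tsum_mul_left, mittagLeffler]
        have : Real.Gamma μ ≠ 0 := by positivity
        field_simp

lemma hasDerivAt_mittagLeffler_one_mul_rpow {α : ℝ} (hα : 0 < α) (k : ℝ) {y : ℝ} (hy : 0 < y) :
    HasDerivAt (fun y ↦ mittagLeffler α 1 (k * y ^ α))
      (k * y ^ (α - 1) * mittagLeffler α α (k * y ^ α)) y := by
  refine ((hasDerivAt_mittagLeffler_one hα (k * y ^ α)).comp y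
    ((Real.hasDerivAt_rpow_const (p := α) (Or.inl hy.ne')).const_mul k)).congr_deriv ?_
  field_simp

theorem mittagLeffler_solves_right_fracDeriv_eq_general
    (α l k : ℝ) (hα : 0 < α) (hα1 : α < 1)
    (φ : ℝ → ℝ)
    (hφ : ∀ t, φ t = (l - t) ^ (α - 1) * mittagLeffler α α (k * (l - t) ^ α)) :
    ∀ s ∈ Set.Ioo 0 l, RLDminusR α l φ s = k * φ s := by
  rintro s ⟨-, hs⟩
  obtain rfl : φ = fun t ↦ (l - t) ^ (α - 1) * mittagLeffler α α (k * (l - t) ^ α) := funext hφ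
  have hI : RLIminusR (1 - α) l (fun t ↦ (l - t) ^ (α - 1) * mittagLeffler α α (k * (l - t) ^ α))
      =ᶠ[𝓝 s] fun y ↦ mittagLeffler α 1 (k * (l - y) ^ α) := by
    filter_upwards [Iio_mem_nhds hs] with y hy
    rw [RLIminusR_rpow_mul_mittagLeffler k hα hα (sub_pos.2 hα1) hy]
    simp
  have hD : HasDerivAt (fun y ↦ mittagLeffler α 1 (k * (l - y) ^ α))
      (k * (l - s) ^ (α - 1) * mittagLeffler α α (k * (l - s) ^ α) * -1) s :=
    (hasDerivAt_mittagLeffler_one_mul_rpow hα k (sub_pos.2 hs)).comp s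
      ((hasDerivAt_id s).const_sub l)
  rw [RLDminusR, hI.deriv_eq, hD.deriv]
  ring

/-- The Mittag-Leffler function solves the homogeneous right-sided fractional equation:
for `0 < α < 1`, `l > 0`, `k ∈ ℝ` and `φ(s) = (l-s)^{α-1} E_{α,α}(k(l-s)^α)`, one has
`(D_{l-}^α φ)(s) = k φ(s)` for every `s ∈ (0,l)`. -/
theorem mittagLeffler_solves_right_fracDeriv_eq
    (α l k : ℝ) (hα : 0 < α) (hα1 : α < 1) (hl : 0 < l)
    (φ : ℝ → ℝ)
    (hφ : ∀ t, φ t = (l - t) ^ (α - 1) * mittagLeffler α α (k * (l - t) ^ α)) :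
    ∀ s ∈ Set.Ioo 0 l, RLDminusR α l φ s = k * φ s :=
  mittagLeffler_solves_right_fracDeriv_eq_general α l k hα hα1 φ hφ
end
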